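/- ∑_{n=1}^∞ ( ∑_{k=1}^n 1/(k−1/2)^2 ) / (n−1/2)^3 = (1/2)·t(5) + (3/7)·t(2)·t(3), where t(s) := ∑_{n=1}^∞ 1/(n−1/2)^s. -/

import Mathlib

/-- Single t-value `t(s) = ∑_{n=1}^∞ 1/(n-1/2)^s` (indexed by `n = m+1`, so `n-1/2 = m+1/2`). -/
noncomputable def tval (s : ℕ) : ℝ := ∑' m : ℕ, 1 / ((m : ℝ) + 1/2) ^ s

/-!
Write `x_j = j + 1/2`. The sum is `S = ∑_{j ≤ k} x_j⁻² x_k⁻³`. Splitting off the diagonal gives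
`S = t(5) + U` with `U = ∑_{j < k} x_j⁻² x_k⁻³`, and summation by parts gives `S + L = t(2) t(3)`
with `L = ∑_{j < k} x_j⁻³ x_k⁻²`. It remains to show `L - U = t(2) t(3) / 7`.

Here `L - U = ∑_{j < k} (x_k - x_j) / (x_j x_k)³`. Group by the gap `d = k - j` and expand in
partial fractions in `x_j`: every inner sum telescopes, to
`∑_{i + l = d - 1} x_i⁻² x_l⁻³ - 6 t(2) / d³` (the first part after symmetrising in `i ↔ l`, using
`x_i + x_l = d`). Summing over `d` with the Cauchy product formula and `t(3) = 7 ζ(3)` gives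
`L - U = t(2) t(3) - 6 t(2) ζ(3) = t(2) t(3) / 7`.
-/

open Filter Finset Topology

theorem hasSum_sub_nat_add_of_antitone {f : ℕ → ℝ} (hf : Antitone f)
    (hf0 : Tendsto f atTop (𝓝 0)) (d : ℕ) :
    HasSum (fun j ↦ f j - f (j + d)) (∑ i ∈ range d, f i) := by
  have hpartial (N : ℕ) : ∑ j ∈ range N, (f j - f (j + d)) =
      ∑ i ∈ range d, f i - ∑ i ∈ range d, f (N + i) := by
    have h := sum_range_add f N d
    rw [add_comm N d, sum_range_add f d N] at h
    simp only [sum_sub_distrib, add_comm _ d]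
    linarith
  have htail : Tendsto (fun N ↦ ∑ i ∈ range d, f (N + i)) atTop (𝓝 0) := by
    simpa using tendsto_finsetSum (range d) fun i _ ↦ hf0.comp (tendsto_add_atTop_nat i)
  rw [hasSum_iff_tendsto_nat_of_nonneg fun j ↦ sub_nonneg.2 (hf (Nat.le_add_right j d))]
  simpa [hpartial] using tendsto_const_nhds.sub htail

theorem tsum_sum_range_succ_mul_add_tsum_sum_range_mul {R : Type*} [CommRing R]
    [TopologicalSpace R] [IsTopologicalRing R] [T2Space R] {a b : ℕ → R} {A B : R}
    (ha : HasSum a A) (hb : HasSum b B)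
    (h₁ : Summable fun m ↦ (∑ j ∈ range (m + 1), a j) * b m)
    (h₂ : Summable fun m ↦ (∑ j ∈ range m, b j) * a m) :
    ∑' m, (∑ j ∈ range (m + 1), a j) * b m + ∑' m, (∑ j ∈ range m, b j) * a m = A * B := by
  have hpartial (N : ℕ) : ∑ m ∈ range N, ((∑ j ∈ range (m + 1), a j) * b m
      + (∑ j ∈ range m, b j) * a m) = (∑ j ∈ range N, a j) * ∑ j ∈ range N, b j := by
    induction N with
    | zero => simp
    | succ N ih => rw [sum_range_succ, ih, sum_range_succ a, sum_range_succ b]; ring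
  rw [← h₁.tsum_add h₂]
  refine tendsto_nhds_unique ?_ (ha.tendsto_sum_nat.mul hb.tendsto_sum_nat)
  simpa only [hpartial] using (h₁.add h₂).hasSum.tendsto_sum_nat

theorem Summable.tsum_sum_antidiagonal {α : Type*} [AddCommGroup α] [UniformSpace α]
    [IsUniformAddGroup α] [CompleteSpace α] [T0Space α] {f : ℕ × ℕ → α} (hf : Summable f) :
    ∑' n, ∑ p ∈ antidiagonal n, f p = ∑' p, f p := by
  let e := HasAntidiagonal.sigmaAntidiagonalEquivProd (A := ℕ)
  have he : Summable fun c ↦ f (e c) := e.summable_iff.2 hf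
  rw [← e.tsum_eq f, he.tsum_sigma]
  exact tsum_congr fun n ↦ (Finset.tsum_subtype (antidiagonal n) f).symm

noncomputable def halfInt (j : ℕ) : ℝ := j + 1 / 2

/-- The paper's `t_n(s) = ∑_{k=1}^n 1/(k-1/2)^s`. -/
noncomputable def tpartial (s n : ℕ) : ℝ := ∑ k ∈ range n, 1 / halfInt k ^ s

lemma halfInt_pos (j : ℕ) : 0 < halfInt j := by
  unfold halfInt; positivity

lemma halfInt_add_nat (j d : ℕ) : halfInt (j + d) = halfInt j + d := by
  unfold halfInt; push_cast; ring

lemma halfInt_add_halfInt (i k : ℕ) : halfInt i + halfInt k = ((i + k : ℕ) : ℝ) + 1 := by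
  unfold halfInt; push_cast; ring

lemma halfInt_mono : Monotone halfInt := fun _ _ hij ↦ by
  unfold halfInt; gcongr

lemma summable_one_div_halfInt_pow {s : ℕ} (hs : 2 ≤ s) :
    Summable fun j ↦ 1 / halfInt j ^ s := by
  have h := (Real.summable_one_div_nat_add_rpow (1 / 2) s).2 (by exact_mod_cast hs)
  refine h.congr fun j ↦ ?_
  rw [← halfInt, abs_of_pos (halfInt_pos j), Real.rpow_natCast]

lemma hasSum_tval {s : ℕ} (hs : 2 ≤ s) : HasSum (fun j ↦ 1 / halfInt j ^ s) (tval s) :=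
  (summable_one_div_halfInt_pow hs).hasSum

lemma antitone_one_div_halfInt_pow (s : ℕ) : Antitone fun j ↦ 1 / halfInt j ^ s :=
  fun i _ hij ↦ one_div_le_one_div_of_le (pow_pos (halfInt_pos i) s)
    (pow_le_pow_left₀ (halfInt_pos i).le (halfInt_mono hij) s)

lemma tendsto_one_div_halfInt_pow {s : ℕ} (hs : s ≠ 0) :
    Tendsto (fun j ↦ 1 / halfInt j ^ s) atTop (𝓝 0) := by
  have h : Tendsto halfInt atTop atTop :=
    tendsto_atTop_add_const_right _ _ tendsto_natCast_atTop_atTop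
  simp only [one_div]
  exact ((tendsto_pow_atTop hs).comp h).inv_tendsto_atTop

lemma tpartial_nonneg (s n : ℕ) : 0 ≤ tpartial s n :=
  sum_nonneg fun k _ ↦ by have := halfInt_pos k; positivity

lemma tpartial_le_tval {s : ℕ} (hs : 2 ≤ s) (n : ℕ) : tpartial s n ≤ tval s :=
  (summable_one_div_halfInt_pow hs).sum_le_tsum _ fun k _ ↦ by have := halfInt_pos k; positivity

lemma tpartial_eq_sum_Icc (s n : ℕ) :
    tpartial s n = ∑ k ∈ Icc 1 n, 1 / ((k : ℝ) - 1 / 2) ^ s := by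
  rw [← Ico_add_one_right_eq_Icc, sum_Ico_eq_sum_range, Nat.add_sub_cancel, tpartial]
  refine sum_congr rfl fun k _ ↦ ?_
  unfold halfInt; push_cast; ring_nf

lemma tpartial_succ_eq_sum_antidiagonal (s e : ℕ) :
    tpartial s (e + 1) = ∑ p ∈ antidiagonal e, 1 / halfInt p.1 ^ s :=
  (Nat.sum_antidiagonal_eq_sum_range_succ (fun i _ ↦ 1 / halfInt i ^ s) e).symm

lemma hasSum_one_div_halfInt_pow_sub_shift {s : ℕ} (hs : s ≠ 0) (d : ℕ) :
    HasSum (fun j ↦ 1 / halfInt j ^ s - 1 / halfInt (j + d) ^ s) (tpartial s d) :=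
  hasSum_sub_nat_add_of_antitone (antitone_one_div_halfInt_pow s)
    (tendsto_one_div_halfInt_pow hs) d

lemma summable_tpartial_mul {s r : ℕ} (hs : 2 ≤ s) (hr : 2 ≤ r) (g : ℕ → ℕ) :
    Summable fun m ↦ tpartial s (g m) * (1 / halfInt m ^ r) := by
  refine ((summable_one_div_halfInt_pow hr).mul_left (tval s)).of_nonneg_of_le
    (fun m ↦ ?_) fun m ↦ ?_
  · have := halfInt_pos m; have := tpartial_nonneg s (g m); positivity
  · have := halfInt_pos m
    gcongr
    exact tpartial_le_tval hs _

lemma tsum_tpartial_succ_mul_eq_tval_add :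
    ∑' m, tpartial 2 (m + 1) * (1 / halfInt m ^ 3)
      = tval 5 + ∑' m, tpartial 2 m * (1 / halfInt m ^ 3) := by
  have hU : Summable fun m ↦ tpartial 2 m * (1 / halfInt m ^ 3) :=
    summable_tpartial_mul le_rfl (by norm_num) id
  rw [← (hasSum_tval (by norm_num)).tsum_eq, ← Summable.tsum_add
    (summable_one_div_halfInt_pow (by norm_num)) hU]
  refine tsum_congr fun m ↦ ?_
  rw [tpartial, sum_range_succ, ← tpartial, add_mul, one_div_mul_one_div, ← pow_add]
  ring

lemma tsum_tpartial_succ_mul_add_tsum_tpartial_mul :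
    ∑' m, tpartial 2 (m + 1) * (1 / halfInt m ^ 3) + ∑' m, tpartial 3 m * (1 / halfInt m ^ 2)
      = tval 2 * tval 3 :=
  tsum_sum_range_succ_mul_add_tsum_sum_range_mul (hasSum_tval le_rfl) (hasSum_tval (by norm_num))
    (summable_tpartial_mul le_rfl (by norm_num) (· + 1))
    (summable_tpartial_mul (by norm_num) le_rfl id)

theorem tval_eq_mul_tsum_one_div_nat_succ_pow {s : ℕ} (hs : 2 ≤ s) :
    tval s = (2 ^ s - 1) * ∑' n : ℕ, 1 / ((n : ℝ) + 1) ^ s := by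
  have hζ : Summable fun n : ℕ ↦ 1 / (n : ℝ) ^ s := Real.summable_one_div_nat_pow.2 (by omega)
  have heven (k : ℕ) : 1 / ((2 * k : ℕ) : ℝ) ^ s = (1 / 2 ^ s) * (1 / (k : ℝ) ^ s) := by
    push_cast; rw [mul_pow]; field_simp
  have hodd (k : ℕ) : 1 / ((2 * k + 1 : ℕ) : ℝ) ^ s = (1 / 2 ^ s) * (1 / halfInt k ^ s) := by
    unfold halfInt; push_cast
    rw [show 2 * (k : ℝ) + 1 = 2 * (k + 1 / 2) by ring, mul_pow]
    field_simp
  have hsplit := tsum_even_add_odd (f := fun n : ℕ ↦ 1 / (n : ℝ) ^ s)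
    (by simpa only [heven] using hζ.mul_left _)
    (by simpa only [hodd] using (summable_one_div_halfInt_pow hs).mul_left _)
  simp only [heven, hodd, tsum_mul_left] at hsplit
  rw [hζ.tsum_eq_zero_add] at hsplit
  simp only [Nat.cast_zero, zero_pow (by omega : s ≠ 0), div_zero, zero_add, Nat.cast_add,
    Nat.cast_one] at hsplit
  change _ + 1 / 2 ^ s * tval s = _ at hsplit
  have h2 : (0 : ℝ) < 2 ^ s := by positivity
  field_simp at hsplit ⊢
  linarith

/-- The `y`-part of the partial fraction expansion of `(y + z) / (y³ z³)` in `y` at fixed `y + z`;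
hence it symmetrises to `1/(y² z³) + 1/(y³ z²)`. -/
noncomputable def pfKernel (y z : ℝ) : ℝ :=
  1 / (y ^ 3 * (y + z) ^ 2) + 3 / (y ^ 2 * (y + z) ^ 3) + 6 / (y * (y + z) ^ 4)

lemma pfKernel_add_pfKernel_swap {y z : ℝ} (hy : y ≠ 0) (hz : z ≠ 0) (hyz : y + z ≠ 0) :
    pfKernel y z + pfKernel z y = 1 / (y ^ 2 * z ^ 3) + 1 / (y ^ 3 * z ^ 2) := by
  have hzy : z + y ≠ 0 := by rwa [add_comm]
  unfold pfKernel
  field_simp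
  ring

lemma sum_antidiagonal_pfKernel (e : ℕ) :
    ∑ p ∈ antidiagonal e, pfKernel (halfInt p.1) (halfInt p.2)
      = ∑ p ∈ antidiagonal e, 1 / halfInt p.1 ^ 2 * (1 / halfInt p.2 ^ 3) := by
  have hswap (g : ℕ → ℕ → ℝ) : ∑ p ∈ antidiagonal e, g p.2 p.1 = ∑ p ∈ antidiagonal e, g p.1 p.2 :=
    Nat.sum_antidiagonal_swap (f := fun p ↦ g p.1 p.2)
  have hsym : ∑ p ∈ antidiagonal e, (pfKernel (halfInt p.1) (halfInt p.2)
      + pfKernel (halfInt p.2) (halfInt p.1))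
      = ∑ p ∈ antidiagonal e, (1 / halfInt p.1 ^ 2 * (1 / halfInt p.2 ^ 3)
      + 1 / halfInt p.2 ^ 2 * (1 / halfInt p.1 ^ 3)) := by
    refine sum_congr rfl fun p _ ↦ ?_
    have := halfInt_pos p.1; have := halfInt_pos p.2
    rw [pfKernel_add_pfKernel_swap (by positivity) (by positivity) (by positivity)]
    ring
  rw [sum_add_distrib, sum_add_distrib, hswap (fun i k ↦ pfKernel (halfInt i) (halfInt k)),
    hswap (fun i k ↦ 1 / halfInt i ^ 2 * (1 / halfInt k ^ 3))] at hsym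
  linarith

lemma tpartial_combination_eq_sum_antidiagonal (e : ℕ) :
    1 / ((e : ℝ) + 1) ^ 2 * tpartial 3 (e + 1) + 3 / ((e : ℝ) + 1) ^ 3 * tpartial 2 (e + 1)
      + 6 / ((e : ℝ) + 1) ^ 4 * tpartial 1 (e + 1)
      = ∑ p ∈ antidiagonal e, 1 / halfInt p.1 ^ 2 * (1 / halfInt p.2 ^ 3) := by
  simp only [← sum_antidiagonal_pfKernel, tpartial_succ_eq_sum_antidiagonal, mul_sum,
    ← sum_add_distrib]
  refine sum_congr rfl fun p hp ↦ ?_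
  have := halfInt_pos p.1
  rw [pfKernel, halfInt_add_halfInt, mem_antidiagonal.1 hp]
  field_simp

/-- The term `1/(x_j³ x_k²) - 1/(x_j² x_k³)` of `L - U` at `j < k`, indexed by `(j, k - j - 1)`. -/
noncomputable def gapTerm (p : ℕ × ℕ) : ℝ :=
  1 / (halfInt p.1 ^ 3 * halfInt (p.1 + p.2 + 1) ^ 2)
    - 1 / (halfInt p.1 ^ 2 * halfInt (p.1 + p.2 + 1) ^ 3)

lemma gapTerm_eq (p : ℕ × ℕ) :
    gapTerm p = ((p.2 : ℝ) + 1) / (halfInt p.1 ^ 3 * halfInt (p.1 + p.2 + 1) ^ 3) := by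
  have := halfInt_pos p.1
  rw [gapTerm, add_assoc, halfInt_add_nat]
  push_cast
  field_simp
  ring

lemma summable_gapTerm : Summable gapTerm := by
  have hζ : Summable fun n : ℕ ↦ 1 / ((n : ℝ) + 1) ^ 2 := by
    simpa using (summable_nat_add_iff 1).2 (Real.summable_one_div_nat_pow.2 one_lt_two)
  refine ((summable_one_div_halfInt_pow (s := 3) (by norm_num)).mul_of_nonneg hζ
    (fun j ↦ by have := halfInt_pos j; positivity) fun n ↦ by positivity).of_nonneg_of_le
    (fun p ↦ ?_) fun p ↦ ?_
  · rw [gapTerm_eq]; have := halfInt_pos p.1; have := halfInt_pos (p.1 + p.2 + 1); positivity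
  · have hj := halfInt_pos p.1
    have hd : ((p.2 : ℝ) + 1) ≤ halfInt (p.1 + p.2 + 1) := by
      rw [add_assoc, halfInt_add_nat]; push_cast; linarith
    calc gapTerm p = ((p.2 : ℝ) + 1) / (halfInt p.1 ^ 3 * halfInt (p.1 + p.2 + 1) ^ 3) :=
          gapTerm_eq p
      _ ≤ ((p.2 : ℝ) + 1) / (halfInt p.1 ^ 3 * ((p.2 : ℝ) + 1) ^ 3) := by gcongr
      _ = 1 / halfInt p.1 ^ 3 * (1 / ((p.2 : ℝ) + 1) ^ 2) := by field_simp

lemma gap_eq_partialFractions {y d : ℝ} (hy : 0 < y) (hd : 0 < d) :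
    1 / (y ^ 3 * (y + d) ^ 2) - 1 / (y ^ 2 * (y + d) ^ 3)
      = 1 / d ^ 2 * (1 / y ^ 3 - 1 / (y + d) ^ 3) + 3 / d ^ 3 * (1 / y ^ 2 - 1 / (y + d) ^ 2)
        + 6 / d ^ 4 * (1 / y - 1 / (y + d)) - 6 * (1 / y ^ 2) * (1 / d ^ 3) := by
  have : 0 < y + d := by linarith
  field_simp
  ring

lemma hasSum_gapTerm (e : ℕ) :
    HasSum (fun j ↦ gapTerm (j, e))
      (∑ p ∈ antidiagonal e, 1 / halfInt p.1 ^ 2 * (1 / halfInt p.2 ^ 3)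
        - 6 * tval 2 * (1 / ((e : ℝ) + 1) ^ 3)) := by
  have hd : (0 : ℝ) < (e : ℝ) + 1 := by positivity
  have h3 := (hasSum_one_div_halfInt_pow_sub_shift three_ne_zero (e + 1)).mul_left
    (1 / ((e : ℝ) + 1) ^ 2)
  have h2 := (hasSum_one_div_halfInt_pow_sub_shift two_ne_zero (e + 1)).mul_left
    (3 / ((e : ℝ) + 1) ^ 3)
  have h1 := (hasSum_one_div_halfInt_pow_sub_shift one_ne_zero (e + 1)).mul_left
    (6 / ((e : ℝ) + 1) ^ 4)
  have ht := ((hasSum_tval le_rfl).mul_left 6).mul_right (1 / ((e : ℝ) + 1) ^ 3)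
  have hterm : (fun j ↦ gapTerm (j, e)) = fun j ↦
      1 / ((e : ℝ) + 1) ^ 2 * (1 / halfInt j ^ 3 - 1 / halfInt (j + (e + 1)) ^ 3)
        + 3 / ((e : ℝ) + 1) ^ 3 * (1 / halfInt j ^ 2 - 1 / halfInt (j + (e + 1)) ^ 2)
        + 6 / ((e : ℝ) + 1) ^ 4 * (1 / halfInt j ^ 1 - 1 / halfInt (j + (e + 1)) ^ 1)
        - 6 * (1 / halfInt j ^ 2) * (1 / ((e : ℝ) + 1) ^ 3) := by
    funext j
    dsimp only [gapTerm]
    rw [add_assoc j e 1]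
    simp only [halfInt_add_nat, Nat.cast_add, Nat.cast_one, pow_one]
    exact gap_eq_partialFractions (halfInt_pos j) hd
  rw [hterm, ← tpartial_combination_eq_sum_antidiagonal]
  exact ((h3.add h2).add h1).sub ht

lemma tpartial_succ_mul_sub_eq_sum_gapTerm (n : ℕ) :
    tpartial 3 (n + 1) * (1 / halfInt (n + 1) ^ 2) - tpartial 2 (n + 1) * (1 / halfInt (n + 1) ^ 3)
      = ∑ p ∈ antidiagonal n, gapTerm p := by
  rw [tpartial_succ_eq_sum_antidiagonal, tpartial_succ_eq_sum_antidiagonal, sum_mul, sum_mul,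
    ← sum_sub_distrib]
  refine sum_congr rfl fun p hp ↦ ?_
  rw [gapTerm, mem_antidiagonal.1 hp, one_div_mul_one_div, one_div_mul_one_div]

lemma hasSum_sum_antidiagonal_tval_mul {a b : ℕ} (ha : 2 ≤ a) (hb : 2 ≤ b) :
    HasSum (fun n ↦ ∑ p ∈ antidiagonal n, 1 / halfInt p.1 ^ a * (1 / halfInt p.2 ^ b))
      (tval a * tval b) := by
  have hsa := summable_one_div_halfInt_pow ha
  have hsb := summable_one_div_halfInt_pow hb
  have hprod := hsa.mul_of_nonneg hsb (fun j ↦ by have := halfInt_pos j; positivity)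
    fun j ↦ by have := halfInt_pos j; positivity
  rw [← hsa.hasSum.unique (hasSum_tval ha), ← hsb.hasSum.unique (hasSum_tval hb),
    hsa.tsum_mul_tsum_eq_tsum_sum_antidiagonal hsb hprod]
  exact (summable_sum_mul_antidiagonal_of_summable_mul (f := fun j ↦ 1 / halfInt j ^ a)
    (g := fun j ↦ 1 / halfInt j ^ b) hprod).hasSum

lemma tsum_tpartial_sub_tsum_tpartial :
    ∑' m, tpartial 3 m * (1 / halfInt m ^ 2) - ∑' m, tpartial 2 m * (1 / halfInt m ^ 3)
      = tval 2 * tval 3 - 6 * tval 2 * ∑' n : ℕ, 1 / ((n : ℝ) + 1) ^ 3 := by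
  have hL : Summable fun m ↦ tpartial 3 m * (1 / halfInt m ^ 2) :=
    summable_tpartial_mul (by norm_num) le_rfl id
  have hU : Summable fun m ↦ tpartial 2 m * (1 / halfInt m ^ 3) :=
    summable_tpartial_mul le_rfl (by norm_num) id
  have hζ : Summable fun n : ℕ ↦ 1 / ((n : ℝ) + 1) ^ 3 := by
    simpa using (summable_nat_add_iff 1).2 (Real.summable_one_div_nat_pow.2 (by norm_num : 1 < 3))
  calc ∑' m, tpartial 3 m * (1 / halfInt m ^ 2) - ∑' m, tpartial 2 m * (1 / halfInt m ^ 3)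
      = ∑' n, (tpartial 3 (n + 1) * (1 / halfInt (n + 1) ^ 2)
          - tpartial 2 (n + 1) * (1 / halfInt (n + 1) ^ 3)) := by
        rw [← hL.tsum_sub hU, (hL.sub hU).tsum_eq_zero_add]
        simp [tpartial]
    _ = ∑' n, ∑ p ∈ antidiagonal n, gapTerm p :=
        tsum_congr tpartial_succ_mul_sub_eq_sum_gapTerm
    _ = ∑' e, ∑' j, gapTerm (j, e) := by
        rw [summable_gapTerm.tsum_sum_antidiagonal, summable_gapTerm.tsum_prod]
        exact (Summable.tsum_comm (f := fun j e ↦ gapTerm (j, e)) summable_gapTerm).symm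
    _ = ∑' e, (∑ p ∈ antidiagonal e, 1 / halfInt p.1 ^ 2 * (1 / halfInt p.2 ^ 3)
          - 6 * tval 2 * (1 / ((e : ℝ) + 1) ^ 3)) :=
        tsum_congr fun e ↦ (hasSum_gapTerm e).tsum_eq
    _ = tval 2 * tval 3 - 6 * tval 2 * ∑' n : ℕ, 1 / ((n : ℝ) + 1) ^ 3 := by
        have hcauchy := hasSum_sum_antidiagonal_tval_mul (a := 2) (b := 3) le_rfl (by norm_num)
        rw [hcauchy.summable.tsum_sub (hζ.mul_left _), tsum_mul_left, hcauchy.tsum_eq]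

theorem stmt5 :
    (∑' m : ℕ, (∑ k ∈ Finset.Icc 1 (m + 1), (1 : ℝ) / ((k : ℝ) - 1/2) ^ 2)
        / ((m : ℝ) + 1/2) ^ 3)
      = (1/2) * tval 5 + (3/7) * tval 2 * tval 3 := by
  have hS : ∑' m : ℕ, (∑ k ∈ Finset.Icc 1 (m + 1), (1 : ℝ) / ((k : ℝ) - 1/2) ^ 2)
      / ((m : ℝ) + 1/2) ^ 3 = ∑' m, tpartial 2 (m + 1) * (1 / halfInt m ^ 3) :=
    tsum_congr fun m ↦ by rw [tpartial_eq_sum_Icc, div_eq_mul_one_div, halfInt]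
  have hζ := tval_eq_mul_tsum_one_div_nat_succ_pow (s := 3) (by norm_num)
  rw [hS]
  linear_combination (1 / 2 : ℝ) * tsum_tpartial_succ_mul_eq_tval_add
    + (1 / 2 : ℝ) * tsum_tpartial_succ_mul_add_tsum_tpartial_mul
    - (1 / 2 : ℝ) * tsum_tpartial_sub_tsum_tpartial - (3 / 7 : ℝ) * tval 2 * hζ
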